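/- arXiv:0912.2795 — 3 statements merged into one kernel-verified Lean document; each statement's English description precedes it below -/
import Mathlib

section
/- Let X₁ have distribution function F with E X₁ = 0, E X₁² = 1, β³ = E|X₁|³ < ∞, let f be its characteristic function, f_n(t) = (f(t/√n))ⁿ, ℓ_n = β³/√n + 1/√n. Then for every n ≥ 1 and every t ∈ ℝ: |f_n(t)| ≤ exp{−χ(t, ℓ_n)}, where χ(t,ε) = t²/2 − κ ε |t|³ for |t| ≤ θ₀/ε, χ(t,ε) = (1 − cos(εt))/ε² for θ₀ < ε|t| ≤ 2π, and χ(t,ε) = 0 for |t| > 2π/ε. -/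
/-!
By symmetrization, `|f(s)|² = E cos(s(X - Y))` with `X, Y` independent copies of `X₁`. Hence every
cubic minorant `b u² + c u³ ≤ 1 - cos u` (`u ≥ 0`, `c ≤ 0`) gives
`|f(s)|² ≤ 1 - b s² E(X - Y)² - c |s|³ E|X - Y|³ ≤ 1 - 2 (b s² + c (β³ + 1) |s|³)`,
using `E(X - Y)² = 2` and `|x - y|³ ≤ (|x| + |y|)(x - y)²`, `E|X| ≤ 1`. With `1 - x ≤ e⁻ˣ` this
becomes `|f_n(t)| ≤ exp(-(b t² + c ℓ_n |t|³))`, and each regime of `χ` is of this form: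
`(b, c) = (1/2, -κ)` by the definition of `κ`; `(0, 0)` trivially; and for `θ₀ ≤ w = ℓ_n |t| ≤ 2π`,
`b u² + c u³ = u² T(u)` with `T` the tangent at `w` to `g(u) = (1 - cos u)/u²`. As `g` is convex on
`[π, 2π]`, `T ≤ g` there and `T ≤ 0` beyond `2π`. Left of `θ₀`, `T` lies below the tangent at `θ₀`,
which is `1/2 + g'(θ₀) u` exactly because `θ₀` solves its defining equation; moreover
`g'(θ₀) = -K(θ₀)` for `K(u) = (cos u - 1 + u²/2)/u³`, and `K` increases on `(0, θ₀]`.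
-/

open MeasureTheory ProbabilityTheory

/-- `κ = sup_{x>0} |cos x − 1 + x²/2| / x³ = 0.09916191…`. -/
noncomputable def kappa : ℝ :=
  ⨆ x : Set.Ioi (0 : ℝ), |Real.cos x - 1 + (x : ℝ) ^ 2 / 2| / (x : ℝ) ^ 3

/-- The Prawitz majorant function `χ(t, ε)`: `χ(t,ε) = t²/2 − κ ε |t|³` for `|t| ≤ θ₀/ε`,
`χ(t,ε) = (1 − cos(εt))/ε²` for `θ₀ < ε|t| ≤ 2π`, and `χ(t,ε) = 0` for `|t| > 2π/ε`. -/
noncomputable def chi (θ₀ κ t ε : ℝ) : ℝ :=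
  if |t| ≤ θ₀ / ε then t ^ 2 / 2 - κ * ε * |t| ^ 3
  else if ε * |t| ≤ 2 * Real.pi then (1 - Real.cos (ε * t)) / ε ^ 2
  else 0

open Real Set

def IsCosMinorant (b c : ℝ) : Prop := ∀ u, 0 ≤ u → b * u ^ 2 + c * u ^ 3 ≤ 1 - cos u

lemma bddAbove_range_kappa : BddAbove (range fun x : Ioi (0 : ℝ) =>
    |cos x - 1 + (x : ℝ) ^ 2 / 2| / (x : ℝ) ^ 3) := by
  refine ⟨1, ?_⟩
  rintro _ ⟨⟨x, hx⟩, rfl⟩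
  replace hx : 0 < x := hx
  dsimp only
  have hrem : 0 ≤ cos x - 1 + x ^ 2 / 2 := by linarith [one_sub_sq_div_two_le_cos (x := x)]
  rw [abs_of_nonneg hrem, div_le_one (by positivity)]
  rcases le_or_gt x 1 with hx1 | hx1
  · have h := cos_bound (x := x) (by rwa [abs_of_pos hx])
    rw [abs_of_pos hx, abs_le] at h
    nlinarith [pow_le_pow_of_le_one hx.le hx1 (show 3 ≤ 4 by norm_num)]
  · nlinarith [cos_le_one x]

lemma le_kappa {u : ℝ} (hu : 0 < u) : |cos u - 1 + u ^ 2 / 2| / u ^ 3 ≤ kappa :=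
  le_ciSup bddAbove_range_kappa (⟨u, hu⟩ : Ioi (0 : ℝ))

lemma kappa_nonneg : 0 ≤ kappa :=
  (abs_nonneg _).trans (by simpa using le_kappa one_pos)

lemma isCosMinorant_kappa : IsCosMinorant (1 / 2) (-kappa) := by
  intro u hu
  rcases hu.eq_or_lt with rfl | hu
  · simp
  have h := le_kappa hu
  rw [div_le_iff₀ (by positivity)] at h
  nlinarith [le_abs_self (cos u - 1 + u ^ 2 / 2)]

lemma monotoneOn_Icc_of_hasDerivAt {f f' : ℝ → ℝ} {a b : ℝ}
    (hf : ∀ x ∈ Icc a b, HasDerivAt f (f' x) x) (hf' : ∀ x ∈ Ioo a b, 0 ≤ f' x) :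
    MonotoneOn f (Icc a b) :=
  monotoneOn_of_hasDerivWithinAt_nonneg (convex_Icc a b)
    (fun x hx => (hf x hx).continuousAt.continuousWithinAt)
    (fun x hx => (hf x (interior_subset hx)).hasDerivWithinAt)
    (fun x hx => hf' x (by rwa [interior_Icc] at hx))

lemma antitoneOn_Icc_of_hasDerivAt {f f' : ℝ → ℝ} {a b : ℝ}
    (hf : ∀ x ∈ Icc a b, HasDerivAt f (f' x) x) (hf' : ∀ x ∈ Ioo a b, f' x ≤ 0) :
    AntitoneOn f (Icc a b) :=
  antitoneOn_of_hasDerivWithinAt_nonpos (convex_Icc a b)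
    (fun x hx => (hf x hx).continuousAt.continuousWithinAt)
    (fun x hx => (hf x (interior_subset hx)).hasDerivWithinAt)
    (fun x hx => hf' x (by rwa [interior_Icc] at hx))

lemma sin_sub_mul_cos_nonneg {x : ℝ} (hx₀ : 0 ≤ x) (hxπ : x ≤ π) : 0 ≤ sin x - x * cos x := by
  have hmono : MonotoneOn (fun x => sin x - x * cos x) (Icc 0 π) := by
    refine monotoneOn_Icc_of_hasDerivAt (f' := fun x => x * sin x) (fun x _ => ?_)
      (fun x hx => mul_nonneg hx.1.le (sin_nonneg_of_nonneg_of_le_pi hx.1.le hx.2.le))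
    exact ((hasDerivAt_sin x).sub ((hasDerivAt_id' x).mul (hasDerivAt_cos x))).congr_deriv
      (by ring)
  simpa using hmono (left_mem_Icc.2 pi_pos.le) ⟨hx₀, hxπ⟩ hx₀

lemma ConvexOn.add_mul_sub_le_of_hasDerivAt {S : Set ℝ} {f : ℝ → ℝ} {x y f' : ℝ}
    (hf : ConvexOn ℝ S f) (hx : x ∈ S) (hy : y ∈ S) (hd : HasDerivAt f f' x) :
    f x + f' * (y - x) ≤ f y := by
  rcases lt_trichotomy x y with hxy | rfl | hxy
  · have h := hf.le_slope_of_hasDerivAt hx hy hxy hd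
    rw [slope_def_field, le_div_iff₀ (sub_pos.2 hxy)] at h
    linarith
  · simp
  · have h := hf.slope_le_of_hasDerivAt hy hx hxy hd
    rw [slope_def_field, div_le_iff₀ (sub_pos.2 hxy)] at h
    linarith

noncomputable def oneSubCosDivSq (u : ℝ) : ℝ := (1 - cos u) / u ^ 2

noncomputable def oneSubCosDivSqDeriv (u : ℝ) : ℝ := (u * sin u - 2 * (1 - cos u)) / u ^ 3

lemma hasDerivAt_oneSubCosDivSq {u : ℝ} (hu : u ≠ 0) :
    HasDerivAt oneSubCosDivSq (oneSubCosDivSqDeriv u) u := by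
  refine (((hasDerivAt_cos u).const_sub 1).div (hasDerivAt_pow 2 u)
    (pow_ne_zero 2 hu)).congr_deriv ?_
  rw [oneSubCosDivSqDeriv]
  field_simp
  ring

lemma hasDerivAt_oneSubCosDivSqDeriv {u : ℝ} (hu : u ≠ 0) :
    HasDerivAt oneSubCosDivSqDeriv ((u ^ 2 * cos u - 4 * u * sin u + 6 - 6 * cos u) / u ^ 4) u := by
  refine ((((hasDerivAt_id' u).mul (hasDerivAt_sin u)).sub
    (((hasDerivAt_cos u).const_sub 1).const_mul 2)).div (hasDerivAt_pow 3 u)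
      (pow_ne_zero 3 hu)).congr_deriv ?_
  simp only [Pi.mul_apply, Pi.sub_apply]
  field_simp
  ring

lemma sin_nonpos_of_pi_le_of_le_two_pi {x : ℝ} (hπx : π ≤ x) (hx2π : x ≤ 2 * π) : sin x ≤ 0 := by
  rw [← sin_sub_two_pi]
  exact sin_nonpos_of_nonpos_of_neg_pi_le (by linarith) (by linarith)

lemma oneSubCosDivSq_secondDerivNum_nonneg {u : ℝ} (hπu : π ≤ u) (hu2π : u ≤ 2 * π) :
    0 ≤ u ^ 2 * cos u - 4 * u * sin u + 6 - 6 * cos u := by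
  have hsin := sin_nonpos_of_pi_le_of_le_two_pi hπu hu2π
  rcases le_total u (3 * π / 2) with hu | hu
  · have hmono := monotoneOn_Icc_of_hasDerivAt (a := π) (b := 3 * π / 2)
      (f := fun u => u ^ 2 * cos u - 4 * u * sin u + 6 - 6 * cos u)
      (f' := fun x => sin x * (2 - x ^ 2) - 2 * x * cos x) (fun x _ => by
        refine (((((hasDerivAt_pow 2 x).mul (hasDerivAt_cos x)).sub
          (((hasDerivAt_id' x).const_mul 4).mul (hasDerivAt_sin x))).add_const 6).sub
            ((hasDerivAt_cos x).const_mul 6)).congr_deriv ?_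
        simp only [Nat.cast_ofNat]
        ring)
      fun x ⟨hπx, hx⟩ => by
        have hsin := sin_nonpos_of_pi_le_of_le_two_pi hπx.le (by linarith [pi_pos])
        have hcos : cos x ≤ 0 := cos_nonpos_of_pi_div_two_le_of_le (by linarith [pi_pos])
          (by linarith)
        have hx2 : 2 ≤ x ^ 2 := by nlinarith [pi_gt_three]
        nlinarith [mul_nonneg (neg_nonneg.2 hsin) (sub_nonneg.2 hx2),
          mul_nonneg (neg_nonneg.2 hcos) (pi_pos.trans hπx).le]
    have h := hmono (left_mem_Icc.2 (by linarith [pi_pos])) ⟨hπu, hu⟩ hπu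
    simp only [cos_pi, sin_pi] at h
    nlinarith [pi_lt_d2]
  · have hcos : 0 ≤ cos u := by
      rw [← cos_two_pi_sub]
      exact cos_nonneg_of_mem_Icc ⟨by linarith [pi_pos], by linarith⟩
    nlinarith [cos_le_one u, mul_nonneg hcos (sq_nonneg u), pi_pos]

lemma monotoneOn_oneSubCosDivSqDeriv : MonotoneOn oneSubCosDivSqDeriv (Icc π (2 * π)) :=
  monotoneOn_Icc_of_hasDerivAt
    (fun x hx => hasDerivAt_oneSubCosDivSqDeriv (pi_pos.trans_le hx.1).ne')
    fun x hx => div_nonneg (oneSubCosDivSq_secondDerivNum_nonneg hx.1.le hx.2.le) (by positivity)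

lemma convexOn_oneSubCosDivSq : ConvexOn ℝ (Icc π (2 * π)) oneSubCosDivSq := by
  have hne : ∀ x ∈ Icc π (2 * π), x ≠ 0 := fun x hx => (pi_pos.trans_le hx.1).ne'
  refine convexOn_of_hasDerivWithinAt2_nonneg (convex_Icc _ _)
    (fun x hx => (hasDerivAt_oneSubCosDivSq (hne x hx)).continuousAt.continuousWithinAt)
    (fun x hx => (hasDerivAt_oneSubCosDivSq (hne x (interior_subset hx))).hasDerivWithinAt)
    (fun x hx => (hasDerivAt_oneSubCosDivSqDeriv (hne x (interior_subset hx))).hasDerivWithinAt)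
    fun x hx => ?_
  rw [interior_Icc] at hx
  exact div_nonneg (oneSubCosDivSq_secondDerivNum_nonneg hx.1.le hx.2.le) (by positivity)

lemma oneSubCosDivSqDeriv_nonpos {u : ℝ} (hπu : π ≤ u) (hu2π : u ≤ 2 * π) :
    oneSubCosDivSqDeriv u ≤ 0 := by
  have hsin := sin_nonpos_of_pi_le_of_le_two_pi hπu hu2π
  have hu : 0 ≤ u := pi_pos.le.trans hπu
  refine div_nonpos_of_nonpos_of_nonneg ?_ (by positivity)
  nlinarith [cos_le_one u, mul_nonneg hu (neg_nonneg.2 hsin)]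

lemma oneSubCosDivSq_add_deriv_mul_sub_le {w y : ℝ} (hw : w ∈ Icc π (2 * π))
    (hy : y ∈ Icc π (2 * π)) :
    oneSubCosDivSq w + oneSubCosDivSqDeriv w * (y - w) ≤ oneSubCosDivSq y :=
  convexOn_oneSubCosDivSq.add_mul_sub_le_of_hasDerivAt hw hy
    (hasDerivAt_oneSubCosDivSq (pi_pos.trans_le hw.1).ne')

section Theta

variable {θ₀ : ℝ} (hθ₀mem : θ₀ ∈ Icc π (2 * π))
  (hθ₀root : θ₀ ^ 2 + 2 * θ₀ * sin θ₀ + 6 * (cos θ₀ - 1) = 0)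

include hθ₀mem hθ₀root in
/-- `u⁴` times the derivative of `(cos u - 1 + u² / 2) / u³`: it increases on `[0, π]`, decreases
on `[π, 2π]`, and vanishes at `0` and (by the equation defining it) at `θ₀`. -/
lemma cosRemainderDivCube_derivNum_nonneg {u : ℝ} (hu₀ : 0 ≤ u) (huθ : u ≤ θ₀) :
    0 ≤ 3 - 3 * cos u - u * sin u - u ^ 2 / 2 := by
  have hderiv : ∀ x, HasDerivAt (fun u => 3 - 3 * cos u - u * sin u - u ^ 2 / 2)
      (4 * cos (x / 2) * (sin (x / 2) - x / 2 * cos (x / 2))) x := by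
    intro x
    refine ((((hasDerivAt_const x 3).sub ((hasDerivAt_cos x).const_mul 3)).sub
      ((hasDerivAt_id' x).mul (hasDerivAt_sin x))).sub
        ((hasDerivAt_pow 2 x).div_const 2)).congr_deriv ?_
    have hsin : sin x = 2 * sin (x / 2) * cos (x / 2) := by rw [← sin_two_mul]; ring_nf
    have hcos : cos x = 2 * cos (x / 2) ^ 2 - 1 := by rw [← cos_two_mul]; ring_nf
    rw [hsin, hcos]; ring
  have hsin_sub (x : ℝ) (hx : x ∈ Ioo 0 (2 * π)) : 0 ≤ sin (x / 2) - x / 2 * cos (x / 2) :=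
    sin_sub_mul_cos_nonneg (by linarith [hx.1]) (by linarith [hx.2])
  rcases le_total u π with huπ | hπu
  · have hmono := monotoneOn_Icc_of_hasDerivAt (a := 0) (b := π) (fun x _ => hderiv x)
      fun x ⟨hx₀, hxπ⟩ => by
      have hcos : 0 ≤ cos (x / 2) := cos_nonneg_of_mem_Icc ⟨by linarith [pi_pos], by linarith⟩
      have := hsin_sub x ⟨hx₀, by linarith [pi_pos]⟩
      positivity
    simpa using hmono (left_mem_Icc.2 pi_pos.le) ⟨hu₀, huπ⟩ hu₀
  · have hanti := antitoneOn_Icc_of_hasDerivAt (a := π) (b := 2 * π) (fun x _ => hderiv x)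
      fun x ⟨hπx, hx2π⟩ => by
      have hcos : cos (x / 2) ≤ 0 :=
        cos_nonpos_of_pi_div_two_le_of_le (by linarith) (by linarith [pi_pos])
      have := hsin_sub x ⟨by linarith [pi_pos], hx2π⟩
      nlinarith
    have h := hanti ⟨hπu, huθ.trans hθ₀mem.2⟩ hθ₀mem huθ
    simp only at h
    linarith

include hθ₀mem hθ₀root in
lemma oneSubCosDivSq_sub_mul_deriv_eq_half :
    oneSubCosDivSq θ₀ - θ₀ * oneSubCosDivSqDeriv θ₀ = 1 / 2 := by
  have hθ₀ : θ₀ ≠ 0 := (pi_pos.trans_le hθ₀mem.1).ne'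
  rw [oneSubCosDivSq, oneSubCosDivSqDeriv]
  field_simp
  linear_combination -hθ₀root

include hθ₀mem hθ₀root in
lemma sq_mul_half_add_deriv_mul_le_one_sub_cos {u : ℝ} (hu₀ : 0 ≤ u) (huθ : u ≤ θ₀) :
    u ^ 2 * (1 / 2 + oneSubCosDivSqDeriv θ₀ * u) ≤ 1 - cos u := by
  rcases hu₀.eq_or_lt with rfl | hu₀
  · simp
  have hmono := monotoneOn_Icc_of_hasDerivAt (a := u) (b := θ₀)
    (f := fun x => (cos x - 1 + x ^ 2 / 2) / x ^ 3)
    (f' := fun x => (3 - 3 * cos x - x * sin x - x ^ 2 / 2) / x ^ 4)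
    (fun x hx => by
      have hx : x ≠ 0 := (hu₀.trans_le hx.1).ne'
      refine ((((hasDerivAt_cos x).sub_const 1).add ((hasDerivAt_pow 2 x).div_const 2)).div
        (hasDerivAt_pow 3 x) (pow_ne_zero 3 hx)).congr_deriv ?_
      simp only [Pi.add_apply]
      field_simp
      ring)
    fun x hx => div_nonneg
      (cosRemainderDivCube_derivNum_nonneg hθ₀mem hθ₀root (hu₀.trans hx.1).le hx.2.le)
      (by positivity)
  have hθ₀ : 0 < θ₀ := pi_pos.trans_le hθ₀mem.1
  have h := hmono ⟨le_rfl, huθ⟩ ⟨huθ, le_rfl⟩ huθ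
  have hK : (cos θ₀ - 1 + θ₀ ^ 2 / 2) / θ₀ ^ 3 = -oneSubCosDivSqDeriv θ₀ := by
    rw [oneSubCosDivSqDeriv]
    field_simp
    linear_combination hθ₀root
  simp only [hK] at h
  rw [div_le_iff₀ (by positivity)] at h
  nlinarith

include hθ₀mem hθ₀root in
lemma isCosMinorant_tangent {w : ℝ} (hw : w ∈ Icc θ₀ (2 * π)) :
    IsCosMinorant (oneSubCosDivSq w - w * oneSubCosDivSqDeriv w) (oneSubCosDivSqDeriv w) := by
  intro u hu
  have hwD : w ∈ Icc π (2 * π) := ⟨hθ₀mem.1.trans hw.1, hw.2⟩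
  have htangent (y : ℝ) (hy : y ∈ Icc π (2 * π)) :=
    oneSubCosDivSq_add_deriv_mul_sub_le hwD hy
  suffices h : u ^ 2 * (oneSubCosDivSq w + oneSubCosDivSqDeriv w * (u - w)) ≤ 1 - cos u by
    linear_combination h
  rcases le_total u θ₀ with huθ | hθu
  · have hslope := mul_le_mul_of_nonpos_right
      (monotoneOn_oneSubCosDivSqDeriv hθ₀mem hwD hw.1) (sub_nonpos.2 huθ)
    have hθ₀tangent := htangent θ₀ hθ₀mem
    have hhalf := oneSubCosDivSq_sub_mul_deriv_eq_half hθ₀mem hθ₀root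
    calc u ^ 2 * (oneSubCosDivSq w + oneSubCosDivSqDeriv w * (u - w))
        ≤ u ^ 2 * (1 / 2 + oneSubCosDivSqDeriv θ₀ * u) :=
          mul_le_mul_of_nonneg_left (by linarith) (sq_nonneg u)
      _ ≤ 1 - cos u := sq_mul_half_add_deriv_mul_le_one_sub_cos hθ₀mem hθ₀root hu huθ
  rcases le_total u (2 * π) with hu2π | h2πu
  · have hu₀ : u ≠ 0 := (pi_pos.trans_le (hθ₀mem.1.trans hθu)).ne'
    calc u ^ 2 * (oneSubCosDivSq w + oneSubCosDivSqDeriv w * (u - w))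
        ≤ u ^ 2 * oneSubCosDivSq u :=
          mul_le_mul_of_nonneg_left (htangent u ⟨hθ₀mem.1.trans hθu, hu2π⟩) (sq_nonneg u)
      _ = 1 - cos u := by rw [oneSubCosDivSq]; field_simp
  · have h2π := htangent (2 * π) ⟨by linarith [pi_pos], le_rfl⟩
    have hslope := mul_nonpos_of_nonpos_of_nonneg (oneSubCosDivSqDeriv_nonpos hwD.1 hwD.2)
      (sub_nonneg.2 h2πu)
    rw [show oneSubCosDivSq (2 * π) = 0 by simp [oneSubCosDivSq]] at h2π
    have hneg : oneSubCosDivSq w + oneSubCosDivSqDeriv w * (u - w) ≤ 0 := by linarith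
    nlinarith [cos_le_one u, sq_nonneg u]

include hθ₀mem hθ₀root in
lemma exists_isCosMinorant_chi_eq {ε : ℝ} (hε : 0 < ε) (t : ℝ) :
    ∃ b c, c ≤ 0 ∧ IsCosMinorant b c ∧ chi θ₀ kappa t ε = b * t ^ 2 + c * ε * |t| ^ 3 := by
  unfold chi
  split_ifs with hsmall hmid
  · exact ⟨1 / 2, -kappa, neg_nonpos.2 kappa_nonneg, isCosMinorant_kappa, by ring⟩
  · have hθ₀w : θ₀ ≤ ε * |t| := by
      rw [not_le, div_lt_iff₀ hε] at hsmall
      linarith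
    have ht : |t| ≠ 0 := by
      rintro ht
      rw [ht, mul_zero] at hθ₀w
      linarith [pi_pos.trans_le hθ₀mem.1]
    refine ⟨_, _, oneSubCosDivSqDeriv_nonpos (hθ₀mem.1.trans hθ₀w) hmid,
      isCosMinorant_tangent hθ₀mem hθ₀root ⟨hθ₀w, hmid⟩, ?_⟩
    rw [← cos_abs (ε * t), abs_mul, abs_of_pos hε, oneSubCosDivSq, ← sq_abs t]
    field_simp
    ring
  · exact ⟨0, 0, le_rfl, fun u _ => by simp [cos_le_one], by simp⟩

end Theta

lemma integrable_sq_of_integral_sq_eq_one {μ : Measure ℝ} (hvar : ∫ x, x ^ 2 ∂μ = 1) :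
    Integrable (fun x : ℝ => x ^ 2) μ :=
  Integrable.of_integral_ne_zero (by simp [hvar])

lemma memLp_id_two_of_integral_sq_eq_one {μ : Measure ℝ} (hvar : ∫ x, x ^ 2 ∂μ = 1) :
    MemLp id 2 μ :=
  (memLp_two_iff_integrable_sq aestronglyMeasurable_id).2
    (integrable_sq_of_integral_sq_eq_one hvar)

lemma sq_norm_charFun_eq_integral_cos {μ : Measure ℝ} [IsFiniteMeasure μ] (s : ℝ) :
    ‖charFun μ s‖ ^ 2 = ∫ p : ℝ × ℝ, cos (s * (p.1 - p.2)) ∂(μ.prod μ) := by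
  have hprod : charFun μ s * charFun μ (-s)
      = ∫ p : ℝ × ℝ, Complex.exp (↑(s * (p.1 - p.2)) * Complex.I) ∂(μ.prod μ) := by
    rw [charFun_apply_real, charFun_apply_real, ← integral_prod_mul]
    congr with p
    rw [← Complex.exp_add]
    push_cast
    ring_nf
  have hint : Integrable (fun p : ℝ × ℝ => Complex.exp (↑(s * (p.1 - p.2)) * Complex.I))
      (μ.prod μ) :=
    (integrable_const (1 : ℝ)).mono' (by fun_prop)
      (ae_of_all _ fun p => (Complex.norm_exp_ofReal_mul_I _).le)
  rw [← Complex.normSq_eq_norm_sq, ← Complex.ofReal_re (Complex.normSq _), ← Complex.mul_conj,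
    ← charFun_neg, hprod, ← RCLike.re_to_complex, ← integral_re hint]
  simp only [RCLike.re_to_complex, Complex.exp_ofReal_mul_I_re]

section SymmetrizedMoments

variable {μ : Measure ℝ} [IsProbabilityMeasure μ]
  (hmean : ∫ x, x ∂μ = 0) (hvar : ∫ x, x ^ 2 ∂μ = 1)
  (hint3 : Integrable (fun x => |x| ^ 3) μ)

include hvar in
lemma integrable_sub_sq (x : ℝ) : Integrable (fun y => (x - y) ^ 2) μ :=
  ((memLp_const x).sub (memLp_id_two_of_integral_sq_eq_one hvar)).integrable_sq

include hmean hvar in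
lemma integral_sub_sq (x : ℝ) : ∫ y, (x - y) ^ 2 ∂μ = x ^ 2 + 1 := by
  have hL2 := memLp_id_two_of_integral_sq_eq_one hvar
  have h1 : Integrable (fun y : ℝ => y) μ := hL2.integrable one_le_two
  have h2 := integrable_sq_of_integral_sq_eq_one hvar
  have h3 : Integrable (fun y => x ^ 2 - 2 * x * y) μ := (integrable_const _).sub (h1.const_mul _)
  simp_rw [sub_sq]
  rw [integral_add h3 h2, integral_sub (integrable_const _) (h1.const_mul _), integral_const_mul,
    integral_const]
  simp [hmean, hvar]

include hmean hvar in
lemma integrable_mul_sub_sq_prod {w : ℝ → ℝ} (hw : Measurable w) (hw₀ : ∀ x, 0 ≤ w x)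
    (hwi : Integrable (fun x => w x * (x ^ 2 + 1)) μ) :
    Integrable (fun p : ℝ × ℝ => w p.1 * (p.1 - p.2) ^ 2) (μ.prod μ) := by
  rw [integrable_prod_iff (by fun_prop)]
  refine ⟨ae_of_all _ fun x => (integrable_sub_sq hvar x).const_mul (w x),
    hwi.congr (ae_of_all _ fun x => ?_)⟩
  simp only [Real.norm_of_nonneg (mul_nonneg (hw₀ x) (sq_nonneg _))]
  rw [integral_const_mul, integral_sub_sq hmean hvar]

include hmean hvar in
lemma integral_mul_sub_sq_prod {w : ℝ → ℝ} (hw : Measurable w) (hw₀ : ∀ x, 0 ≤ w x)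
    (hwi : Integrable (fun x => w x * (x ^ 2 + 1)) μ) :
    ∫ p : ℝ × ℝ, w p.1 * (p.1 - p.2) ^ 2 ∂(μ.prod μ) = ∫ x, w x * (x ^ 2 + 1) ∂μ := by
  rw [integral_prod _ (integrable_mul_sub_sq_prod hmean hvar hw hw₀ hwi)]
  simp only [integral_const_mul, integral_sub_sq hmean hvar]

include hmean hvar in
lemma integrable_sub_sq_prod : Integrable (fun p : ℝ × ℝ => (p.1 - p.2) ^ 2) (μ.prod μ) := by
  simpa using integrable_mul_sub_sq_prod hmean hvar (w := fun _ => 1) measurable_const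
    (fun _ => zero_le_one)
    (by simpa using (integrable_sq_of_integral_sq_eq_one hvar).add (integrable_const 1))

include hmean hvar in
lemma integral_sub_sq_prod : ∫ p : ℝ × ℝ, (p.1 - p.2) ^ 2 ∂(μ.prod μ) = 2 := by
  rw [integral_prod _ (integrable_sub_sq_prod hmean hvar)]
  simp only [integral_sub_sq hmean hvar]
  rw [integral_add (integrable_sq_of_integral_sq_eq_one hvar) (integrable_const _), hvar]
  norm_num

include hvar hint3 in
lemma integrable_abs_mul_sq_add_one : Integrable (fun x => |x| * (x ^ 2 + 1)) μ := by
  have h1 : Integrable (fun y : ℝ => y) μ :=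
    (memLp_id_two_of_integral_sq_eq_one hvar).integrable one_le_two
  refine (hint3.add h1.abs).congr (ae_of_all _ fun x => ?_)
  simp only [Pi.add_apply]
  rw [← sq_abs x]
  ring

include hvar hint3 in
lemma integral_abs_mul_sq_add_one_le :
    ∫ x, |x| * (x ^ 2 + 1) ∂μ ≤ (∫ x, |x| ^ 3 ∂μ) + 1 := by
  have hsq := integrable_sq_of_integral_sq_eq_one hvar
  have hsq1 : Integrable (fun x : ℝ => (x ^ 2 + 1) / 2) μ :=
    (hsq.add (integrable_const 1)).div_const 2
  calc ∫ x, |x| * (x ^ 2 + 1) ∂μ ≤ ∫ x, (|x| ^ 3 + (x ^ 2 + 1) / 2) ∂μ :=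
        integral_mono (integrable_abs_mul_sq_add_one hvar hint3) (hint3.add hsq1) fun x => by
          nlinarith [sq_abs x, sq_nonneg (|x| - 1), abs_nonneg x]
    _ = (∫ x, |x| ^ 3 ∂μ) + 1 := by
      rw [integral_add hint3 hsq1, integral_div, integral_add hsq (integrable_const 1), hvar]
      norm_num

lemma abs_sub_pow_three_le (x y : ℝ) : |x - y| ^ 3 ≤ |x| * (x - y) ^ 2 + |y| * (y - x) ^ 2 := by
  have h : |x - y| ^ 3 = |x - y| * (x - y) ^ 2 := by rw [← sq_abs (x - y)]; ring
  rw [h, show (y - x) ^ 2 = (x - y) ^ 2 by ring, ← add_mul]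
  exact mul_le_mul_of_nonneg_right (abs_sub _ _) (sq_nonneg _)

include hmean hvar hint3 in
lemma integrable_abs_mul_sub_sq_prod :
    Integrable (fun p : ℝ × ℝ => |p.1| * (p.1 - p.2) ^ 2) (μ.prod μ) :=
  integrable_mul_sub_sq_prod hmean hvar continuous_abs.measurable abs_nonneg
    (integrable_abs_mul_sq_add_one hvar hint3)

include hmean hvar hint3 in
lemma integrable_abs_sub_pow_three_prod :
    Integrable (fun p : ℝ × ℝ => |p.1 - p.2| ^ 3) (μ.prod μ) := by
  have hF := integrable_abs_mul_sub_sq_prod hmean hvar hint3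
  refine (hF.add hF.swap).mono' (by fun_prop) (ae_of_all _ fun p => ?_)
  rw [Real.norm_of_nonneg (by positivity)]
  exact abs_sub_pow_three_le p.1 p.2

include hmean hvar hint3 in
lemma integral_abs_sub_pow_three_prod_le :
    ∫ p : ℝ × ℝ, |p.1 - p.2| ^ 3 ∂(μ.prod μ) ≤ 2 * ((∫ x, |x| ^ 3 ∂μ) + 1) := by
  have hF := integrable_abs_mul_sub_sq_prod hmean hvar hint3
  have hFswap : Integrable (fun p : ℝ × ℝ => |p.2| * (p.2 - p.1) ^ 2) (μ.prod μ) := hF.swap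
  have hswap := integral_prod_swap (μ := μ) (ν := μ) fun p : ℝ × ℝ => |p.1| * (p.1 - p.2) ^ 2
  simp only [Prod.fst_swap, Prod.snd_swap] at hswap
  calc ∫ p : ℝ × ℝ, |p.1 - p.2| ^ 3 ∂(μ.prod μ)
      ≤ ∫ p : ℝ × ℝ, (|p.1| * (p.1 - p.2) ^ 2 + |p.2| * (p.2 - p.1) ^ 2) ∂(μ.prod μ) :=
        integral_mono (integrable_abs_sub_pow_three_prod hmean hvar hint3) (hF.add hFswap)
          fun p => abs_sub_pow_three_le p.1 p.2
    _ = 2 * ∫ p : ℝ × ℝ, |p.1| * (p.1 - p.2) ^ 2 ∂(μ.prod μ) := by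
      rw [integral_add hF hFswap, hswap]
      ring
    _ ≤ 2 * ((∫ x, |x| ^ 3 ∂μ) + 1) := by
      rw [integral_mul_sub_sq_prod hmean hvar continuous_abs.measurable abs_nonneg
        (integrable_abs_mul_sq_add_one hvar hint3)]
      linarith [integral_abs_mul_sq_add_one_le hvar hint3]

include hmean hvar hint3 in
lemma sq_norm_charFun_le {b c : ℝ} (hc : c ≤ 0) (hbc : IsCosMinorant b c) (s : ℝ) :
    ‖charFun μ s‖ ^ 2 ≤ 1 - 2 * (b * s ^ 2 + c * ((∫ x, |x| ^ 3 ∂μ) + 1) * |s| ^ 3) := by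
  have hsq := integrable_sub_sq_prod hmean hvar
  have hcube := integrable_abs_sub_pow_three_prod hmean hvar hint3
  have hcos : Integrable (fun p : ℝ × ℝ => cos (s * (p.1 - p.2))) (μ.prod μ) :=
    (integrable_const (1 : ℝ)).mono' (by fun_prop) (ae_of_all _ fun p => abs_cos_le_one _)
  have hpt (p : ℝ × ℝ) :
      b * s ^ 2 * (p.1 - p.2) ^ 2 + c * |s| ^ 3 * |p.1 - p.2| ^ 3 ≤ 1 - cos (s * (p.1 - p.2)) := by
    have h := hbc |s * (p.1 - p.2)| (abs_nonneg _)
    rw [cos_abs, sq_abs, abs_mul] at h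
    linear_combination h
  have hlhs : Integrable (fun p : ℝ × ℝ =>
      b * s ^ 2 * (p.1 - p.2) ^ 2 + c * |s| ^ 3 * |p.1 - p.2| ^ 3) (μ.prod μ) :=
    (hsq.const_mul _).add (hcube.const_mul _)
  have hrhs : Integrable (fun p : ℝ × ℝ => 1 - cos (s * (p.1 - p.2))) (μ.prod μ) :=
    (integrable_const 1).sub hcos
  have hmono := integral_mono hlhs hrhs hpt
  rw [integral_add (hsq.const_mul _) (hcube.const_mul _), integral_const_mul, integral_const_mul,
    integral_sub_sq_prod hmean hvar, integral_sub (integrable_const 1) hcos,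
    ← sq_norm_charFun_eq_integral_cos] at hmono
  have hthird := mul_le_mul_of_nonpos_left (integral_abs_sub_pow_three_prod_le hmean hvar hint3)
    (mul_nonpos_of_nonpos_of_nonneg hc (by positivity : (0 : ℝ) ≤ |s| ^ 3))
  simp only [integral_const, probReal_univ, smul_eq_mul, one_mul] at hmono
  linarith

end SymmetrizedMoments

lemma norm_pow_le_exp_of_sq_norm_le {z : ℂ} {x : ℝ} (h : ‖z‖ ^ 2 ≤ 1 - 2 * x) (n : ℕ) :
    ‖z ^ n‖ ≤ exp (-(n * x)) := by
  have hexp : 1 - 2 * x ≤ exp (-x) ^ 2 := by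
    rw [← exp_nat_mul]
    push_cast
    linarith [add_one_le_exp (2 * -x)]
  have hz : ‖z‖ ≤ exp (-x) :=
    (pow_le_pow_iff_left₀ (norm_nonneg z) (exp_pos _).le two_ne_zero).1 (h.trans hexp)
  calc ‖z ^ n‖ = ‖z‖ ^ n := norm_pow z n
    _ ≤ exp (-x) ^ n := pow_le_pow_left₀ (norm_nonneg z) hz n
    _ = exp (-(n * x)) := by rw [← exp_nat_mul]; ring_nf

theorem charFun_bound_f2_general (μ : Measure ℝ) [IsProbabilityMeasure μ]
    (hmean : ∫ x, x ∂μ = 0) (hvar : ∫ x, x ^ 2 ∂μ = 1)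
    (hint3 : Integrable (fun x => |x| ^ 3) μ)
    (β3 : ℝ) (hβ3 : β3 = ∫ x, |x| ^ 3 ∂μ)
    (f : ℝ → ℂ) (hf : ∀ t : ℝ, f t = ∫ x, Complex.exp (Complex.I * t * x) ∂μ)
    (θ₀ : ℝ) (hθ₀mem : θ₀ ∈ Set.Icc Real.pi (2 * Real.pi))
    (hθ₀root : θ₀ ^ 2 + 2 * θ₀ * Real.sin θ₀ + 6 * (Real.cos θ₀ - 1) = 0)
    (n : ℕ) (t : ℝ) :
    ‖(f (t / Real.sqrt n)) ^ n‖ ≤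
      Real.exp (-chi θ₀ kappa t (β3 / Real.sqrt n + 1 / Real.sqrt n)) := by
  obtain rfl | hn := n.eq_zero_or_pos
  -- for `n = 0`, `x / 0 = 0` makes `ℓ₀ = 0`, and then `χ = 0`
  · simp only [chi, CharP.cast_eq_zero, sqrt_zero, div_zero, add_zero, pow_zero, norm_one]
    split_ifs <;> simp_all
  have hfμ : f = charFun μ := funext fun s => by
    rw [hf, charFun_apply_real]
    congr with x
    ring_nf
  have hsqrt : 0 < √(n : ℝ) := by positivity
  have hβ3₀ : 0 ≤ β3 := hβ3 ▸ integral_nonneg fun x => by positivity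
  obtain ⟨b, c, hc, hbc, hchi⟩ := exists_isCosMinorant_chi_eq hθ₀mem hθ₀root
    (ε := β3 / √n + 1 / √n) (by positivity) t
  rw [hchi, hfμ]
  refine (norm_pow_le_exp_of_sq_norm_le
    (sq_norm_charFun_le hmean hvar hint3 hc hbc (t / √n)) n).trans_eq ?_
  rw [← hβ3, abs_div, abs_of_pos hsqrt]
  congr 1
  field_simp
  rw [sq_sqrt (Nat.cast_nonneg n)]

/-- Second estimate of Lemma 2: for a distribution with zero mean, unit variance and third
absolute moment `β³`, with `ℓ_n = β³/√n + 1/√n`, the characteristic function `f_n` of the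
normalized `n`-fold sum satisfies `|f_n(t)| ≤ exp{−χ(t, ℓ_n)}`. -/
theorem charFun_bound_f2 (μ : Measure ℝ) [IsProbabilityMeasure μ]
    (hmean : ∫ x, x ∂μ = 0) (hvar : ∫ x, x ^ 2 ∂μ = 1)
    (hint3 : Integrable (fun x => |x| ^ 3) μ)
    (β3 : ℝ) (hβ3 : β3 = ∫ x, |x| ^ 3 ∂μ)
    (f : ℝ → ℂ) (hf : ∀ t : ℝ, f t = ∫ x, Complex.exp (Complex.I * t * x) ∂μ)
    (θ₀ : ℝ) (hθ₀mem : θ₀ ∈ Set.Icc Real.pi (2 * Real.pi))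
    (hθ₀root : θ₀ ^ 2 + 2 * θ₀ * Real.sin θ₀ + 6 * (Real.cos θ₀ - 1) = 0)
    (n : ℕ) (hn : 1 ≤ n) (t : ℝ) :
    ‖(f (t / Real.sqrt n)) ^ n‖ ≤
      Real.exp (-chi θ₀ kappa t (β3 / Real.sqrt n + 1 / Real.sqrt n)) :=
  charFun_bound_f2_general μ hmean hvar hint3 β3 hβ3 f hf θ₀ hθ₀mem hθ₀root n t
end

section
/- Let κ = sup_{x>0}|cos x − 1 + x²/2|/x³ = 0.09916191…, let N ≥ 1 and ε > 1/√N, and let T(N,ε) = min{N^{1/4} ε^{−1/2}, (2κε)^{−1}}. Then for every real t with |t| ≤ T(N,ε) and every integer n ≥ N: (ε − 1/√n) · e^{−t²/2} ∫₀^{|t|} (u²/2) · exp{ κ ε u³ + (u²/(2n))(1 − 2κ ε u) } du ≤ (1/(6κ)) (e^{κ ε |t|³} − 1) e^{−t²/2}. -/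
/-!
For `0 ≤ u ≤ |t|` the correction `a = u²/(2n) (1 − 2κεu)` in the exponent is at most `u²/(2n)`,
and `|t|² ≤ √N/ε ≤ √n/ε` gives `ε a ≤ 1/√n`. Hence
`(ε − 1/√n) e^a ≤ ε (1 − a) e^a ≤ ε`, so the integrand may be replaced by `ε u²/2 · e^{κεu³}`, whose
integral over `[0, |t|]` is `(e^{κε|t|³} − 1)/(6κε)`.
-/

open MeasureTheory

lemma abs_cos_sub_one_add_sq_div_two_le {x : ℝ} (hx : 0 < x) :
    |Real.cos x - 1 + x ^ 2 / 2| ≤ x ^ 3 / 2 := by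
  have hnonneg : 0 ≤ Real.cos x - 1 + x ^ 2 / 2 := by
    linarith [Real.one_sub_sq_div_two_le_cos (x := x)]
  rw [abs_of_nonneg hnonneg]
  rcases le_or_gt x 1 with hx1 | hx1
  · have h := (abs_le.mp (Real.cos_bound (abs_le.mpr ⟨by linarith, hx1⟩))).2
    rw [abs_of_pos hx] at h
    nlinarith [pow_pos hx 3]
  · nlinarith [Real.cos_le_one x]

lemma kappa_bddAbove : BddAbove (Set.range fun x : Set.Ioi (0 : ℝ) =>
    |Real.cos x - 1 + (x : ℝ) ^ 2 / 2| / (x : ℝ) ^ 3) := by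
  refine ⟨1 / 2, ?_⟩
  rintro _ ⟨⟨x, hx : 0 < x⟩, rfl⟩
  rw [div_le_iff₀ (by positivity)]
  linarith [abs_cos_sub_one_add_sq_div_two_le hx]

lemma kappa_pos : 0 < kappa := by
  have hπ : 0 < |Real.cos Real.pi - 1 + Real.pi ^ 2 / 2| / Real.pi ^ 3 := by
    rw [Real.cos_pi]
    have := Real.pi_gt_three
    exact div_pos (abs_pos.mpr (by nlinarith)) (by positivity)
  exact hπ.trans_le (le_ciSup kappa_bddAbove ⟨Real.pi, Real.pi_pos⟩)

lemma sub_mul_exp_le_of_mul_le {ε d a : ℝ} (hε : 0 ≤ ε) (had : ε * a ≤ d) :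
    (ε - d) * Real.exp a ≤ ε := by
  have h : ε - d ≤ ε * Real.exp (-a) := by
    nlinarith [Real.one_sub_le_exp_neg a]
  calc (ε - d) * Real.exp a ≤ ε * Real.exp (-a) * Real.exp a := by gcongr
    _ = ε := by rw [mul_assoc, ← Real.exp_add, neg_add_cancel, Real.exp_zero, mul_one]

lemma mul_sq_div_mul_le_one_div_sqrt (n : ℕ) {ε u b : ℝ} (hε : 0 ≤ ε) (hb : b ≤ 1)
    (hu : ε * u ^ 2 ≤ Real.sqrt n) : ε * (u ^ 2 / (2 * n) * b) ≤ 1 / Real.sqrt n :=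
  calc ε * (u ^ 2 / (2 * n) * b) ≤ ε * (u ^ 2 / (2 * n)) := by
        gcongr; exact mul_le_of_le_one_right (by positivity) hb
    _ = ε * u ^ 2 / (2 * n) := by ring
    _ ≤ Real.sqrt n / (2 * n) := by gcongr
    _ = 1 / Real.sqrt n / 2 := by rw [← Real.sqrt_div_self']; ring
    _ ≤ 1 / Real.sqrt n := half_le_self (by positivity)

lemma mul_sq_le_sqrt_of_le_rpow_div_sqrt {x ε s : ℝ} (hx : 0 ≤ x) (hε : 0 < ε) (hs : 0 ≤ s)
    (h : s ≤ x ^ (1 / 4 : ℝ) / Real.sqrt ε) : ε * s ^ 2 ≤ Real.sqrt x := by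
  have hsq : s ^ 2 ≤ Real.sqrt x / ε :=
    calc s ^ 2 ≤ (x ^ (1 / 4 : ℝ) / Real.sqrt ε) ^ 2 := by gcongr
      _ = Real.sqrt x / ε := by
        rw [div_pow, Real.sq_sqrt hε.le, ← Real.rpow_natCast, ← Real.rpow_mul hx,
          Real.sqrt_eq_rpow]
        norm_num
  rwa [le_div_iff₀ hε, mul_comm] at hsq

lemma integral_sq_div_two_mul_exp_mul_cube {c : ℝ} (hc : c ≠ 0) (s : ℝ) :
    ∫ u in (0 : ℝ)..s, u ^ 2 / 2 * Real.exp (c * u ^ 3) =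
      (Real.exp (c * s ^ 3) - 1) / (6 * c) := by
  have hderiv : ∀ u ∈ Set.uIcc 0 s, HasDerivAt (fun v => Real.exp (c * v ^ 3) / (6 * c))
      (u ^ 2 / 2 * Real.exp (c * u ^ 3)) u := by
    intro u _
    refine (((hasDerivAt_pow 3 u).const_mul c).exp.div_const (6 * c)).congr_deriv ?_
    field_simp
    ring
  rw [intervalIntegral.integral_eq_sub_of_hasDerivAt hderiv
    (Continuous.intervalIntegrable (by fun_prop) 0 s)]
  simp only [ne_eq, OfNat.ofNat_ne_zero, not_false_eq_true, zero_pow, mul_zero, Real.exp_zero]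
  ring

lemma sub_inv_sqrt_mul_integrand_le (n : ℕ) {κ ε u : ℝ} (hκ : 0 ≤ κ) (hε : 0 ≤ ε) (hu : 0 ≤ u)
    (hu_n : ε * u ^ 2 ≤ Real.sqrt n) :
    (ε - 1 / Real.sqrt n) *
        (u ^ 2 / 2 * Real.exp (κ * ε * u ^ 3 + u ^ 2 / (2 * n) * (1 - 2 * κ * ε * u))) ≤
      ε * (u ^ 2 / 2 * Real.exp (κ * ε * u ^ 3)) := by
  have hb : 1 - 2 * κ * ε * u ≤ 1 := by
    have : 0 ≤ 2 * κ * ε * u := by positivity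
    linarith
  have hcorr := sub_mul_exp_le_of_mul_le hε (mul_sq_div_mul_le_one_div_sqrt n hε hb hu_n)
  rw [Real.exp_add]
  calc _ = u ^ 2 / 2 * Real.exp (κ * ε * u ^ 3) *
        ((ε - 1 / Real.sqrt n) * Real.exp (u ^ 2 / (2 * n) * (1 - 2 * κ * ε * u))) := by ring
    _ ≤ u ^ 2 / 2 * Real.exp (κ * ε * u ^ 3) * ε :=
        mul_le_mul_of_nonneg_left hcorr (by positivity)
    _ = _ := by ring

lemma sub_inv_sqrt_mul_integral_le (n : ℕ) {κ ε s : ℝ} (hκ : 0 < κ) (hε : 0 < ε) (hs : 0 ≤ s)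
    (hs_n : ε * s ^ 2 ≤ Real.sqrt n) :
    (ε - 1 / Real.sqrt n) * ∫ u in (0 : ℝ)..s,
        u ^ 2 / 2 * Real.exp (κ * ε * u ^ 3 + u ^ 2 / (2 * n) * (1 - 2 * κ * ε * u)) ≤
      1 / (6 * κ) * (Real.exp (κ * ε * s ^ 3) - 1) := by
  rw [← intervalIntegral.integral_const_mul]
  calc _ ≤ ∫ u in (0 : ℝ)..s, ε * (u ^ 2 / 2 * Real.exp (κ * ε * u ^ 3)) := by
        refine intervalIntegral.integral_mono_on hs (Continuous.intervalIntegrable (by fun_prop) _ _)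
          (Continuous.intervalIntegrable (by fun_prop) _ _) fun u ⟨hu, hus⟩ => ?_
        exact sub_inv_sqrt_mul_integrand_le n hκ.le hε.le hu (le_trans (by gcongr) hs_n)
    _ = 1 / (6 * κ) * (Real.exp (κ * ε * s ^ 3) - 1) := by
        rw [intervalIntegral.integral_const_mul,
          integral_sq_div_two_mul_exp_mul_cube (by positivity)]
        field_simp

theorem r3_sup_bound_general (N : ℕ) (ε : ℝ) (hε : 1 / Real.sqrt N < ε)
    (t : ℝ)
    (ht : |t| ≤ min ((N : ℝ) ^ ((1 : ℝ) / 4) / Real.sqrt ε) (2 * kappa * ε)⁻¹)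
    (n : ℕ) (hn : N ≤ n) :
    (ε - 1 / Real.sqrt n) * Real.exp (-t ^ 2 / 2) *
        ∫ u in (0 : ℝ)..|t|, u ^ 2 / 2 *
          Real.exp (kappa * ε * u ^ 3 + u ^ 2 / (2 * n) * (1 - 2 * kappa * ε * u)) ≤
      1 / (6 * kappa) * (Real.exp (kappa * ε * |t| ^ 3) - 1) * Real.exp (-t ^ 2 / 2) := by
  have hε₀ : 0 < ε := lt_of_le_of_lt (by positivity) hε
  have hκ := kappa_pos
  have ht_N : ε * |t| ^ 2 ≤ Real.sqrt N :=
    mul_sq_le_sqrt_of_le_rpow_div_sqrt (Nat.cast_nonneg N) hε₀ (abs_nonneg t)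
      (ht.trans (min_le_left _ _))
  have ht_n : ε * |t| ^ 2 ≤ Real.sqrt n :=
    ht_N.trans (Real.sqrt_le_sqrt (by exact_mod_cast hn))
  calc _ = ((ε - 1 / Real.sqrt n) * ∫ u in (0 : ℝ)..|t|, u ^ 2 / 2 *
          Real.exp (kappa * ε * u ^ 3 + u ^ 2 / (2 * n) * (1 - 2 * kappa * ε * u))) *
        Real.exp (-t ^ 2 / 2) := by ring
    _ ≤ _ := mul_le_mul_of_nonneg_right
        (sub_inv_sqrt_mul_integral_le n hκ hε₀ (abs_nonneg t) ht_n) (Real.exp_nonneg _)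

/-- Third statement of Lemma 4: for `N ≥ 1`, `ε > 1/√N` and
`T(N,ε) = min{N^{1/4} ε^{−1/2}, (2κε)^{−1}}`, for all `|t| ≤ T(N,ε)` and all integers
`n ≥ N`, the majorant `r₃(t, ε − 1/√n, n)` is bounded by
`r̃₃(t,ε) = (1/(6κ))(e^{κε|t|³} − 1)e^{−t²/2}`. -/
theorem r3_sup_bound (N : ℕ) (hN : 1 ≤ N) (ε : ℝ) (hε : 1 / Real.sqrt N < ε)
    (t : ℝ)
    (ht : |t| ≤ min ((N : ℝ) ^ ((1 : ℝ) / 4) / Real.sqrt ε) (2 * kappa * ε)⁻¹)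
    (n : ℕ) (hn : N ≤ n) :
    (ε - 1 / Real.sqrt n) * Real.exp (-t ^ 2 / 2) *
        ∫ u in (0 : ℝ)..|t|, u ^ 2 / 2 *
          Real.exp (kappa * ε * u ^ 3 + u ^ 2 / (2 * n) * (1 - 2 * kappa * ε * u)) ≤
      1 / (6 * kappa) * (Real.exp (kappa * ε * |t| ^ 3) - 1) * Real.exp (-t ^ 2 / 2) :=
  r3_sup_bound_general N ε hε t ht n hn
end

section
/- Let X₁, X₂, … be i.i.d. real random variables with E X₁ = μ, Var X₁ = σ² > 0 and β³ := E|X₁|³ < ∞, let 0 < ν ≤ 1, let N_ν be a Poisson random variable with parameter ν independent of the X_i, and let Y = X₁ + ⋯ + X_{N_ν} (Y = 0 if N_ν = 0). Then E Y = μν, Var Y = (μ²+σ²)ν, and E|Y − μν|³ ≤ ν β³ (1 + 40ν). -/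
/-!
Conditioning on `N`, which is independent of the summands, turns every moment of
`Y = X₁ + ⋯ + X_N` into the Poisson average `∑ₖ P(N = k) E φ(S_k)` of the same moment of the
partial sum `S_k`. For fixed `k`, `E S_k = kμ` and `E (S_k - c)² = kσ² + (kμ - c)²`; bounding
`|S_k - μν| ≤ ν|μ| + ∑ |Xᵢ|` and applying the power-mean inequality with weights `ν, 1, …, 1`
together with `|μ|³ ≤ β³` gives `E|S_k - μν|³ ≤ (ν + k)³ β³`. The Poisson moments, all obtained
from `E[N f(N)] = ν E[f(N + 1)]`, then give `E Y = μν`, `E (Y - μν)² = (σ² + μ²)ν` and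
`E|Y - μν|³ ≤ (ν + 6ν² + 8ν³) β³ ≤ νβ³(1 + 40ν)` when `ν ≤ 1`.
-/

open MeasureTheory ProbabilityTheory Finset
open scoped Nat

theorem pow_sum_mul_le_sum_pow_mul_sum_mul_pow {ι : Type*} (s : Finset ι) {w z : ι → ℝ}
    (hw : ∀ i ∈ s, 0 ≤ w i) (hz : ∀ i ∈ s, 0 ≤ z i) (n : ℕ) :
    (∑ i ∈ s, w i * z i) ^ (n + 1) ≤ (∑ i ∈ s, w i) ^ n * ∑ i ∈ s, w i * z i ^ (n + 1) := by
  set W := ∑ i ∈ s, w i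
  rcases (sum_nonneg hw).eq_or_lt with hW | hW
  · have hw0 : ∀ g : ι → ℝ, ∑ i ∈ s, w i * g i = 0 := fun g =>
      sum_eq_zero fun i hi => by rw [(sum_eq_zero_iff_of_nonneg hw).1 hW.symm i hi, zero_mul]
    simp [hw0]
  · have h := Real.pow_arith_mean_le_arith_mean_pow s (fun i => w i / W) z
      (fun i hi => div_nonneg (hw i hi) hW.le) (by rw [← sum_div, div_self hW.ne']) hz (n + 1)
    simp only [div_mul_eq_mul_div, ← sum_div, div_pow] at h
    rw [div_le_div_iff₀ (by positivity) hW] at h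
    exact le_of_mul_le_mul_right (h.trans_eq (by ring)) hW

theorem pow_mul_add_sum_le {ι : Type*} (s : Finset ι) {y : ι → ℝ} (hy : ∀ i ∈ s, 0 ≤ y i)
    {t a : ℝ} (ht : 0 ≤ t) (ha : 0 ≤ a) (n : ℕ) :
    (t * a + ∑ i ∈ s, y i) ^ (n + 1)
      ≤ (t + #s) ^ n * (t * a ^ (n + 1) + ∑ i ∈ s, y i ^ (n + 1)) := by
  have := pow_sum_mul_le_sum_pow_mul_sum_mul_pow (insertNone s) (w := fun o => o.elim t 1)
    (z := fun o => o.elim a y) (by rintro (_ | i) _ <;> simp [ht])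
    (by rintro (_ | i) hi <;> simp_all) n
  simpa [sum_insertNone] using this

theorem abs_sum_sub_mul_pow_three_le {ι : Type*} (s : Finset ι) (x : ι → ℝ) (m : ℝ) {t : ℝ}
    (ht : 0 ≤ t) :
    |∑ i ∈ s, x i - m * t| ^ 3 ≤ (t + #s) ^ 2 * (t * |m| ^ 3 + ∑ i ∈ s, |x i| ^ 3) := by
  have htri : |∑ i ∈ s, x i - m * t| ≤ t * |m| + ∑ i ∈ s, |x i| :=
    calc _ ≤ |∑ i ∈ s, x i| + |m * t| := abs_sub _ _
      _ ≤ _ := by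
        rw [abs_mul, abs_of_nonneg ht, mul_comm, add_comm]
        gcongr
        exact abs_sum_le_sum_abs _ _
  exact (pow_le_pow_left₀ (abs_nonneg _) htri 3).trans
    (pow_mul_add_sum_le s (fun i _ => abs_nonneg (x i)) ht (abs_nonneg m) 2)

noncomputable def poissonWeight (ν : ℝ) (k : ℕ) : ℝ := Real.exp (-ν) * ν ^ k / k !

theorem poissonWeight_nonneg {ν : ℝ} (hν : 0 ≤ ν) (k : ℕ) : 0 ≤ poissonWeight ν k := by
  unfold poissonWeight; positivity

theorem hasSum_poissonWeight {ν : ℝ} (hν : 0 ≤ ν) : HasSum (poissonWeight ν) 1 :=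
  hasSum_one_poissonMeasure ⟨ν, hν⟩

theorem succ_mul_poissonWeight_succ (ν : ℝ) (k : ℕ) :
    (k + 1) * poissonWeight ν (k + 1) = ν * poissonWeight ν k := by
  unfold poissonWeight
  rw [Nat.factorial_succ, Nat.cast_mul, pow_succ]
  field_simp
  push_cast
  ring

theorem HasSum.poissonWeight_mul_natCast_mul {ν : ℝ} {f : ℕ → ℝ} {s : ℝ}
    (h : HasSum (fun k => poissonWeight ν k * f (k + 1)) s) :
    HasSum (fun k : ℕ => poissonWeight ν k * (k * f k)) (ν * s) := by
  refine (hasSum_nat_add_iff' 1).1 ?_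
  simp only [range_one, sum_singleton, CharP.cast_eq_zero, zero_mul, mul_zero, sub_zero]
  refine (h.mul_left ν).congr_fun fun k => ?_
  push_cast
  linear_combination f (k + 1) * succ_mul_poissonWeight_succ ν k

theorem hasSum_poissonWeight_mul_natCast {ν : ℝ} (hν : 0 ≤ ν) :
    HasSum (fun k : ℕ => poissonWeight ν k * k) ν := by
  simpa using ((hasSum_poissonWeight hν).mul_right 1).poissonWeight_mul_natCast_mul
    (f := fun _ => 1)

theorem hasSum_poissonWeight_mul_natCast_sq {ν : ℝ} (hν : 0 ≤ ν) :
    HasSum (fun k : ℕ => poissonWeight ν k * k ^ 2) (ν ^ 2 + ν) := by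
  have h : HasSum (fun k : ℕ => poissonWeight ν k * ((k + 1 : ℕ) : ℝ)) (ν + 1) :=
    ((hasSum_poissonWeight_mul_natCast hν).add (hasSum_poissonWeight hν)).congr_fun
      fun k => by push_cast; ring
  rw [show ν ^ 2 + ν = ν * (ν + 1) by ring]
  exact (h.poissonWeight_mul_natCast_mul (f := fun k => k)).congr_fun fun k => by ring

theorem hasSum_poissonWeight_mul_natCast_pow_three {ν : ℝ} (hν : 0 ≤ ν) :
    HasSum (fun k : ℕ => poissonWeight ν k * k ^ 3) (ν ^ 3 + 3 * ν ^ 2 + ν) := by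
  have h₀ := ((hasSum_poissonWeight_mul_natCast_sq hν).add
      ((hasSum_poissonWeight_mul_natCast hν).mul_left 2)).add (hasSum_poissonWeight hν)
  have h : HasSum (fun k : ℕ => poissonWeight ν k * ((k + 1 : ℕ) : ℝ) ^ 2)
      (ν ^ 2 + ν + 2 * ν + 1) :=
    h₀.congr_fun fun k => by push_cast; ring
  rw [show ν ^ 3 + 3 * ν ^ 2 + ν = ν * (ν ^ 2 + ν + 2 * ν + 1) by ring]
  exact (h.poissonWeight_mul_natCast_mul (f := fun k => (k : ℝ) ^ 2)).congr_fun fun k => by ring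

theorem hasSum_poissonWeight_mul_natCast_sub_sq {ν : ℝ} (hν : 0 ≤ ν) :
    HasSum (fun k : ℕ => poissonWeight ν k * (k - ν) ^ 2) ν := by
  have h := ((hasSum_poissonWeight_mul_natCast_sq hν).sub
    ((hasSum_poissonWeight_mul_natCast hν).mul_left (2 * ν))).add
    ((hasSum_poissonWeight hν).mul_left (ν ^ 2))
  rw [show ν ^ 2 + ν - 2 * ν * ν + ν ^ 2 * 1 = ν by ring] at h
  exact h.congr_fun fun k => by ring

theorem hasSum_poissonWeight_mul_add_natCast_pow_three {ν : ℝ} (hν : 0 ≤ ν) :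
    HasSum (fun k : ℕ => poissonWeight ν k * (ν + k) ^ 3) (ν + 6 * ν ^ 2 + 8 * ν ^ 3) := by
  have h := (((hasSum_poissonWeight_mul_natCast_pow_three hν).add
    ((hasSum_poissonWeight_mul_natCast_sq hν).mul_left (3 * ν))).add
    ((hasSum_poissonWeight_mul_natCast hν).mul_left (3 * ν ^ 2))).add
    ((hasSum_poissonWeight hν).mul_left (ν ^ 3))
  rw [show ν + 6 * ν ^ 2 + 8 * ν ^ 3
    = ν ^ 3 + 3 * ν ^ 2 + ν + 3 * ν * (ν ^ 2 + ν) + 3 * ν ^ 2 * ν + ν ^ 3 * 1 by ring]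
  exact h.congr_fun fun k => by ring

section Conditioning

variable {Ω E : Type*} [MeasurableSpace Ω] [MeasurableSpace E] {P : Measure Ω}
  {N : Ω → ℕ} {Z : Ω → E}

theorem hasSum_integral_comp_of_indepFun (hN : Measurable N) (hZ : Measurable Z)
    (hNZ : IndepFun N Z P) {G : ℕ → E → ℝ} (hG : ∀ k, Measurable (G k))
    (hint : ∀ k, Integrable (fun ω => G k (Z ω)) P)
    (hsum : Summable fun k => P.real {ω | N ω = k} * ∫ ω, |G k (Z ω)| ∂P) :
    HasSum (fun k => P.real {ω | N ω = k} * ∫ ω, G k (Z ω) ∂P) (∫ ω, G (N ω) (Z ω) ∂P) := by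
  have hA : ∀ k, MeasurableSet[MeasurableSpace.comap N inferInstance] {ω | N ω = k} :=
    fun k => ⟨{k}, measurableSet_singleton k, rfl⟩
  have hset : ∀ {F : E → ℝ}, Measurable F → ∀ k,
      ∫ ω in {ω | N ω = k}, F (Z ω) ∂P = P.real {ω | N ω = k} * ∫ ω, F (Z ω) ∂P :=
    fun hF k => Indep.setIntegral_eq_mul hN.comap_le hNZ hZ.aemeasurable (hA k)
      hF.aestronglyMeasurable
  have hmeas : ∀ k, MeasurableSet {ω | N ω = k} := fun k => hN (measurableSet_singleton k)
  -- `G (N ω) (Z ω) = ∑ₖ 1{N = k}(ω) G k (Z ω)`, and independence factors each term.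
  have key := hasSum_integral_of_summable_integral_norm
    (F := fun k => {ω | N ω = k}.indicator fun ω => G k (Z ω))
    (fun k => (hint k).indicator (hmeas k)) ?_
  · have hpoint : ∀ ω, ∑' k, {ω | N ω = k}.indicator (fun ω => G k (Z ω)) ω = G (N ω) (Z ω) :=
      fun ω => by
        rw [tsum_eq_single (N ω) fun k hk =>
          Set.indicator_of_notMem (s := {ω | N ω = k}) (Ne.symm hk) _]
        simp
    simp only [hpoint] at key
    refine key.congr_fun fun k => ?_
    rw [integral_indicator (hmeas k), hset (hG k)]
  · refine hsum.congr fun k => ?_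
    simp only [norm_indicator_eq_indicator_norm, Real.norm_eq_abs]
    rw [integral_indicator (hmeas k), hset ((hG k).abs) k]

end Conditioning

section IID

variable {Ω : Type*} [MeasurableSpace Ω] {P : Measure Ω}

theorem abs_integral_pow_le_integral_abs_pow [IsProbabilityMeasure P] {f : Ω → ℝ} {n : ℕ}
    (hf : Integrable f P) (hfn : Integrable (fun ω => |f ω| ^ n) P) :
    |∫ ω, f ω ∂P| ^ n ≤ ∫ ω, |f ω| ^ n ∂P := by
  calc |∫ ω, f ω ∂P| ^ n ≤ (∫ ω, |f ω| ∂P) ^ n :=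
        pow_le_pow_left₀ (abs_nonneg _) (abs_integral_le_integral_abs) n
    _ ≤ ∫ ω, |f ω| ^ n ∂P :=
        (convexOn_pow n).map_integral_le (continuousOn_pow n) isClosed_Ici
          (.of_forall fun ω => abs_nonneg (f ω)) hf.abs hfn

theorem integral_sub_sq_eq_variance_add [IsProbabilityMeasure P] {Y : Ω → ℝ}
    (hY : MemLp Y 2 P) (c : ℝ) :
    ∫ ω, (Y ω - c) ^ 2 ∂P = Var[Y; P] + (∫ ω, Y ω ∂P - c) ^ 2 := by
  have h := variance_eq_sub (X := fun ω => Y ω - c) (hY.sub (memLp_const c))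
  rw [variance_sub_const hY.aestronglyMeasurable,
    integral_sub (hY.integrable one_le_two) (integrable_const c)] at h
  simp only [Pi.pow_apply, integral_const, probReal_univ, one_smul] at h
  linarith

variable {X : ℕ → Ω → ℝ}

theorem integral_sum_range_of_identDistrib (hX : ∀ i, IdentDistrib (X i) (X 0) P P)
    (h1 : Integrable (X 0) P) (k : ℕ) :
    ∫ ω, ∑ i ∈ range k, X i ω ∂P = k * ∫ ω, X 0 ω ∂P := by
  rw [integral_finsetSum _ fun i _ => (hX i).integrable_iff.2 h1]
  simp [(hX _).integral_eq]

theorem integral_abs_sum_range_le_of_identDistrib (hX : ∀ i, IdentDistrib (X i) (X 0) P P)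
    (h1 : Integrable (X 0) P) (k : ℕ) :
    ∫ ω, |∑ i ∈ range k, X i ω| ∂P ≤ k * ∫ ω, |X 0 ω| ∂P := by
  have hXabs : ∀ i, IdentDistrib (fun ω => |X i ω|) (fun ω => |X 0 ω|) P P :=
    fun i => (hX i).comp measurable_abs
  rw [← integral_sum_range_of_identDistrib hXabs h1.abs k]
  exact integral_mono (integrable_finsetSum _ fun i _ => ((hX i).integrable_iff.2 h1)).abs
    (integrable_finsetSum _ fun i _ => ((hXabs i).integrable_iff.2 h1.abs))
    fun ω => abs_sum_le_sum_abs _ _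

theorem variance_sum_range_of_identDistrib (hX : ∀ i, IdentDistrib (X i) (X 0) P P)
    (hindep : iIndepFun X P) (h2 : MemLp (X 0) 2 P) (k : ℕ) :
    Var[fun ω => ∑ i ∈ range k, X i ω; P] = k * Var[X 0; P] := by
  have := IndepFun.variance_sum (s := range k) (fun i _ => (hX i).memLp_iff.2 h2)
    fun i _ j _ hij => hindep.indepFun hij
  simp only [sum_fn] at this
  simp [this, (hX _).variance_eq]

theorem integral_abs_sum_range_sub_pow_three_le [IsProbabilityMeasure P]
    (hX : ∀ i, IdentDistrib (X i) (X 0) P P)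
    (h3 : MemLp (X 0) 3 P) {t : ℝ} (ht : 0 ≤ t) (k : ℕ) :
    ∫ ω, |∑ i ∈ range k, X i ω - (∫ ω, X 0 ω ∂P) * t| ^ 3 ∂P
      ≤ (t + k) ^ 3 * ∫ ω, |X 0 ω| ^ 3 ∂P := by
  set m := ∫ ω, X 0 ω ∂P
  set β := ∫ ω, |X 0 ω| ^ 3 ∂P
  have hX3 : ∀ i, MemLp (X i) 3 P := fun i => (hX i).memLp_iff.2 h3
  have hXabs3 : ∀ i, Integrable (fun ω => |X i ω| ^ 3) P := fun i => by
    simpa using (hX3 i).integrable_norm_pow'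
  have hXabs3id : ∀ i, IdentDistrib (fun ω => |X i ω| ^ 3) (fun ω => |X 0 ω| ^ 3) P P :=
    fun i => (hX i).comp (measurable_abs.pow_const 3)
  have hm : |m| ^ 3 ≤ β := abs_integral_pow_le_integral_abs_pow
    ((hX3 0).integrable (by norm_num)) (hXabs3 0)
  have hint : Integrable (fun ω => |∑ i ∈ range k, X i ω - m * t| ^ 3) P := by
    simpa using
      ((memLp_finsetSum _ fun i _ => hX3 i).sub (memLp_const (m * t))).integrable_norm_pow'
  calc _ ≤ ∫ ω, (t + k) ^ 2 * (t * |m| ^ 3 + ∑ i ∈ range k, |X i ω| ^ 3) ∂P :=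
        integral_mono hint ((((integrable_const _).add
          (integrable_finsetSum _ fun i _ => hXabs3 i))).const_mul _)
          fun ω => by simpa using abs_sum_sub_mul_pow_three_le (range k) (X · ω) m ht
    _ = (t + k) ^ 2 * (t * |m| ^ 3 + k * β) := by
        rw [integral_const_mul, integral_add (integrable_const _)
          (integrable_finsetSum _ fun i _ => hXabs3 i),
          integral_sum_range_of_identDistrib hXabs3id (hXabs3 0)]
        simp [β]
    _ ≤ (t + k) ^ 2 * (t * β + k * β) := by gcongr
    _ = (t + k) ^ 3 * β := by ring

end IID

section CompoundPoisson

variable {Ω : Type*} [MeasurableSpace Ω] {P : Measure Ω} {N : Ω → ℕ} {X : ℕ → Ω → ℝ}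

theorem hasSum_integral_comp_sum_range_of_indepFun (hN : Measurable N)
    (hXm : ∀ i, Measurable (X i)) (hNX : IndepFun N (fun ω i => X i ω) P) {F : ℝ → ℝ}
    (hF : Measurable F) (hint : ∀ k, Integrable (fun ω => F (∑ i ∈ range k, X i ω)) P)
    (hsum : Summable fun k => P.real {ω | N ω = k} * ∫ ω, |F (∑ i ∈ range k, X i ω)| ∂P) :
    HasSum (fun k => P.real {ω | N ω = k} * ∫ ω, F (∑ i ∈ range k, X i ω) ∂P)
      (∫ ω, F (∑ i ∈ range (N ω), X i ω) ∂P) :=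
  hasSum_integral_comp_of_indepFun hN (measurable_pi_lambda _ hXm) hNX
    (fun _ => hF.comp (Finset.measurable_sum _ fun i _ => measurable_pi_apply i)) hint hsum

theorem integral_compoundPoissonSum (hN : Measurable N) (hXm : ∀ i, Measurable (X i))
    (hNX : IndepFun N (fun ω i => X i ω) P) {ν : ℝ} (hν : 0 ≤ ν)
    (hpois : ∀ k, P.real {ω | N ω = k} = poissonWeight ν k)
    (hX : ∀ i, IdentDistrib (X i) (X 0) P P) (h1 : Integrable (X 0) P) :
    ∫ ω, ∑ i ∈ range (N ω), X i ω ∂P = (∫ ω, X 0 ω ∂P) * ν := by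
  have hsum : Summable fun k => P.real {ω | N ω = k} * ∫ ω, |∑ i ∈ range k, X i ω| ∂P := by
    refine Summable.of_nonneg_of_le (fun k => by positivity) (fun k => ?_)
      ((hasSum_poissonWeight_mul_natCast hν).summable.mul_right (∫ ω, |X 0 ω| ∂P))
    rw [hpois, mul_assoc]
    exact mul_le_mul_of_nonneg_left (integral_abs_sum_range_le_of_identDistrib hX h1 k)
      (poissonWeight_nonneg hν k)
  refine (hasSum_integral_comp_sum_range_of_indepFun hN hXm hNX (F := fun x => x) measurable_id
    (fun k => integrable_finsetSum _ fun i _ => (hX i).integrable_iff.2 h1) hsum).unique ?_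
  simp only [hpois, integral_sum_range_of_identDistrib hX h1]
  exact ((hasSum_poissonWeight_mul_natCast hν).mul_left _).congr_fun fun k => by ring

theorem integral_compoundPoissonSum_sub_sq [IsProbabilityMeasure P] (hN : Measurable N)
    (hXm : ∀ i, Measurable (X i)) (hNX : IndepFun N (fun ω i => X i ω) P) {ν : ℝ} (hν : 0 ≤ ν)
    (hpois : ∀ k, P.real {ω | N ω = k} = poissonWeight ν k)
    (hX : ∀ i, IdentDistrib (X i) (X 0) P P) (hindep : iIndepFun X P) (h2 : MemLp (X 0) 2 P) :
    ∫ ω, (∑ i ∈ range (N ω), X i ω - (∫ ω, X 0 ω ∂P) * ν) ^ 2 ∂P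
      = (Var[X 0; P] + (∫ ω, X 0 ω ∂P) ^ 2) * ν := by
  set m := ∫ ω, X 0 ω ∂P
  have hS2 : ∀ k, MemLp (fun ω => ∑ i ∈ range k, X i ω) 2 P := fun k =>
    memLp_finsetSum _ fun i _ => (hX i).memLp_iff.2 h2
  have hk : ∀ k : ℕ, ∫ ω, (∑ i ∈ range k, X i ω - m * ν) ^ 2 ∂P
      = k * Var[X 0; P] + m ^ 2 * (k - ν) ^ 2 := fun k => by
    rw [integral_sub_sq_eq_variance_add (hS2 k), variance_sum_range_of_identDistrib hX hindep h2,
      integral_sum_range_of_identDistrib hX (h2.integrable one_le_two)]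
    ring
  have h := ((hasSum_poissonWeight_mul_natCast hν).mul_left Var[X 0; P]).add
    ((hasSum_poissonWeight_mul_natCast_sub_sq hν).mul_left (m ^ 2))
  rw [show (Var[X 0; P] + m ^ 2) * ν = Var[X 0; P] * ν + m ^ 2 * ν by ring]
  refine (hasSum_integral_comp_sum_range_of_indepFun hN hXm hNX (F := fun x => (x - m * ν) ^ 2)
    (by fun_prop) (fun k => ?_) ?_).unique (h.congr_fun fun k => ?_)
  · simpa using ((hS2 k).sub (memLp_const (m * ν))).integrable_norm_pow'
  · simp only [abs_sq, hpois, hk]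
    exact h.summable.congr fun k => by ring
  · simp only [hpois, hk]
    ring

theorem integral_abs_compoundPoissonSum_sub_pow_three_le [IsProbabilityMeasure P]
    (hN : Measurable N) (hXm : ∀ i, Measurable (X i)) (hNX : IndepFun N (fun ω i => X i ω) P)
    {ν : ℝ} (hν : 0 ≤ ν) (hpois : ∀ k, P.real {ω | N ω = k} = poissonWeight ν k)
    (hX : ∀ i, IdentDistrib (X i) (X 0) P P) (h3 : MemLp (X 0) 3 P) :
    ∫ ω, |∑ i ∈ range (N ω), X i ω - (∫ ω, X 0 ω ∂P) * ν| ^ 3 ∂P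
      ≤ (ν + 6 * ν ^ 2 + 8 * ν ^ 3) * ∫ ω, |X 0 ω| ^ 3 ∂P := by
  set m := ∫ ω, X 0 ω ∂P
  have hbound : ∀ k, poissonWeight ν k * ∫ ω, |∑ i ∈ range k, X i ω - m * ν| ^ 3 ∂P
      ≤ poissonWeight ν k * ((ν + k) ^ 3 * ∫ ω, |X 0 ω| ^ 3 ∂P) := fun k =>
    mul_le_mul_of_nonneg_left (integral_abs_sum_range_sub_pow_three_le hX h3 hν k)
      (poissonWeight_nonneg hν k)
  have h := (hasSum_poissonWeight_mul_add_natCast_pow_three hν).mul_right (∫ ω, |X 0 ω| ^ 3 ∂P)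
  simp only [mul_assoc] at h
  have hS := hasSum_integral_comp_sum_range_of_indepFun hN hXm hNX
    (F := fun x => |x - m * ν| ^ 3) (by fun_prop) (fun k => ?_) ?_
  · simp only [hpois] at hS
    exact hasSum_le hbound hS h
  · simpa using ((memLp_finsetSum _ fun i _ => (hX i).memLp_iff.2 h3).sub
      (memLp_const (m * ν))).integrable_norm_pow'
  · simp only [abs_pow, abs_abs, hpois]
    exact h.summable.of_nonneg_of_le (fun k => mul_nonneg (poissonWeight_nonneg hν k)
      (integral_nonneg fun ω => by positivity)) hbound

end CompoundPoisson

theorem compound_poisson_moments_general {Ω : Type*} [MeasurableSpace Ω]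
    (P : Measure Ω) [IsProbabilityMeasure P]
    (X : ℕ → Ω → ℝ) (N : Ω → ℕ) (μ σ β3 ν : ℝ)
    (hν0 : 0 < ν) (hν1 : ν ≤ 1)
    (hmeas : ∀ i, Measurable (X i)) (hNmeas : Measurable N)
    (hindep : iIndepFun X P)
    (hident : ∀ i, Measure.map (X i) P = Measure.map (X 0) P)
    (hNX : IndepFun N (fun ω i => X i ω) P)
    (hpois : ∀ k : ℕ,
      P {ω | N ω = k} = ENNReal.ofReal (Real.exp (-ν) * ν ^ k / Nat.factorial k))
    (hmean : ∫ ω, X 0 ω ∂P = μ)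
    (hvar : ∫ ω, (X 0 ω - μ) ^ 2 ∂P = σ ^ 2)
    (hint3 : Integrable (fun ω => |X 0 ω| ^ 3) P)
    (hβ3 : β3 = ∫ ω, |X 0 ω| ^ 3 ∂P) :
    (∫ ω, ∑ i ∈ Finset.range (N ω), X i ω ∂P = μ * ν) ∧
    (∫ ω, ((∑ i ∈ Finset.range (N ω), X i ω) - μ * ν) ^ 2 ∂P = (μ ^ 2 + σ ^ 2) * ν) ∧
    (∫ ω, |(∑ i ∈ Finset.range (N ω), X i ω) - μ * ν| ^ 3 ∂P ≤ ν * β3 * (1 + 40 * ν)) := by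
  subst hmean hβ3
  have hX : ∀ i, IdentDistrib (X i) (X 0) P P :=
    fun i => ⟨(hmeas i).aemeasurable, (hmeas 0).aemeasurable, hident i⟩
  have h3 : MemLp (X 0) 3 P := (integrable_norm_rpow_iff (hmeas 0).aestronglyMeasurable
    (by norm_num) (by norm_num)).1
      (by simpa only [ENNReal.toReal_ofNat, Real.rpow_ofNat, Real.norm_eq_abs] using hint3)
  have hpois' : ∀ k, P.real {ω | N ω = k} = poissonWeight ν k := fun k => by
    rw [measureReal_def, hpois]
    exact ENNReal.toReal_ofReal (poissonWeight_nonneg hν0.le k)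
  have hvar' : Var[X 0; P] = σ ^ 2 := by rw [variance_eq_integral (hmeas 0).aemeasurable, hvar]
  refine ⟨integral_compoundPoissonSum hNmeas hmeas hNX hν0.le hpois' hX
    (h3.integrable (by norm_num)), ?_, ?_⟩
  · rw [integral_compoundPoissonSum_sub_sq hNmeas hmeas hNX hν0.le hpois' hX hindep
      (h3.mono_exponent (by norm_num)), hvar']
    ring
  · refine (integral_abs_compoundPoissonSum_sub_pow_three_le hNmeas hmeas hNX hν0.le hpois' hX
      h3).trans ?_
    have hβ : 0 ≤ ∫ ω, |X 0 ω| ^ 3 ∂P := integral_nonneg fun ω => by positivity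
    nlinarith [mul_nonneg (mul_nonneg hβ (sq_nonneg ν)) (sub_nonneg.2 hν1),
      mul_nonneg hβ (sq_nonneg ν)]

/-- Lemma 7 (moments of a compound Poisson sum): if `X₁, X₂, …` are i.i.d. with mean `μ`,
variance `σ² > 0` and third absolute moment `β³ < ∞`, and `N` is a Poisson random
variable with parameter `ν ∈ (0,1]` independent of the sequence, then the compound
Poisson sum `Y = X₁ + ⋯ + X_N` satisfies `E Y = μν`, `Var Y = (μ²+σ²)ν` and
`E|Y − μν|³ ≤ ν β³ (1 + 40ν)`. -/
theorem compound_poisson_moments {Ω : Type*} [MeasurableSpace Ω]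
    (P : Measure Ω) [IsProbabilityMeasure P]
    (X : ℕ → Ω → ℝ) (N : Ω → ℕ) (μ σ β3 ν : ℝ)
    (hσ : 0 < σ) (hν0 : 0 < ν) (hν1 : ν ≤ 1)
    (hmeas : ∀ i, Measurable (X i)) (hNmeas : Measurable N)
    (hindep : iIndepFun X P)
    (hident : ∀ i, Measure.map (X i) P = Measure.map (X 0) P)
    (hNX : IndepFun N (fun ω i => X i ω) P)
    (hpois : ∀ k : ℕ,
      P {ω | N ω = k} = ENNReal.ofReal (Real.exp (-ν) * ν ^ k / Nat.factorial k))
    (hmean : ∫ ω, X 0 ω ∂P = μ)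
    (hvar : ∫ ω, (X 0 ω - μ) ^ 2 ∂P = σ ^ 2)
    (hint3 : Integrable (fun ω => |X 0 ω| ^ 3) P)
    (hβ3 : β3 = ∫ ω, |X 0 ω| ^ 3 ∂P) :
    (∫ ω, ∑ i ∈ Finset.range (N ω), X i ω ∂P = μ * ν) ∧
    (∫ ω, ((∑ i ∈ Finset.range (N ω), X i ω) - μ * ν) ^ 2 ∂P = (μ ^ 2 + σ ^ 2) * ν) ∧
    (∫ ω, |(∑ i ∈ Finset.range (N ω), X i ω) - μ * ν| ^ 3 ∂P ≤ ν * β3 * (1 + 40 * ν)) :=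
  compound_poisson_moments_general P X N μ σ β3 ν hν0 hν1 hmeas hNmeas hindep hident hNX hpois hmean
    hvar hint3 hβ3
end
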